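/- Let f : I → ℝ³ be a smooth unit speed space-like curve on S²₁ (⟨f,f⟩ = 1, ⟨f',f'⟩ = 1) with geodesic curvature κ_g. Let a > 0 and ξ₁ ∈ ℝ be constants, assume tanh(ξ₁)·κ_g(v) < 1 and κ_g(v) ≠ tanh(ξ₁) for all v ∈ I, and let γ(v) = a·∫₀ᵛ f(t)dt + a·tanh(ξ₁)·∫₀ᵛ f(t) × f'(t) dt, with curvature κ and torsion τ given by κ = ‖γ' × γ''‖ / ⟨γ', γ'⟩^{3/2} and τ = det(γ', γ'', γ''') / ‖γ' × γ''‖². Then f is a part of a pseudo-circle on S²₁ (i.e. κ_g'(v) = 0 for all v ∈ I) if and only if γ is a helix, i.e. both κ and τ are non-zero constant functions on I (equivalently, τ/κ is constant). -/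

import Mathlib

noncomputable section

open Real

/-- The Lorentzian (Minkowski) inner product on ℝ³: ⟨x,y⟩ = x₁y₁ + x₂y₂ − x₃y₃. -/
def mink (x y : Fin 3 → ℝ) : ℝ := x 0 * y 0 + x 1 * y 1 - x 2 * y 2

/-- The Lorentzian cross product on ℝ³:
x × y = (x₂y₃ − x₃y₂, x₃y₁ − x₁y₃, x₂y₁ − x₁y₂). -/
def mcross (x y : Fin 3 → ℝ) : Fin 3 → ℝ :=
  ![x 1 * y 2 - x 2 * y 1, x 2 * y 0 - x 0 * y 2, x 1 * y 0 - x 0 * y 1]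

/-- Determinant of three vectors in ℝ³ (as the rows of a 3×3 matrix). -/
def mdet (x y z : Fin 3 → ℝ) : ℝ := Matrix.det (Matrix.of ![x, y, z])

/-- The pseudo norm ‖x‖ = √|⟨x,x⟩|. -/
def mnorm (x : Fin 3 → ℝ) : ℝ := Real.sqrt |mink x x|

open scoped ContDiff

lemma mcross_apply (x y : Fin 3 → ℝ) : mcross x y 0 = x 1 * y 2 - x 2 * y 1 ∧
    mcross x y 1 = x 2 * y 0 - x 0 * y 2 ∧ mcross x y 2 = x 1 * y 0 - x 0 * y 1 := by
  refine ⟨rfl, rfl, rfl⟩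

lemma mdet_expand (x y z : Fin 3 → ℝ) : mdet x y z =
    x 0 * (y 1 * z 2 - y 2 * z 1) - x 1 * (y 0 * z 2 - y 2 * z 0) + x 2 * (y 0 * z 1 - y 1 * z 0) := by
  simp [mdet, Matrix.det_fin_three]; ring

lemma mink_comm (x y : Fin 3 → ℝ) : mink x y = mink y x := by simp [mink]; ring

lemma mdet_eq_mink_mcross (x y z : Fin 3 → ℝ) : mdet x y z = mink (mcross x y) z := by
  simp [mdet_expand, mink, mcross]; ring

lemma lagrange (x y z w : Fin 3 → ℝ) :
    mink (mcross x y) (mcross z w) = mink x w * mink y z - mink x z * mink y w := by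
  simp [mink, mcross]; ring

lemma mcross_self (x : Fin 3 → ℝ) : mcross x x = 0 := by
  funext i; fin_cases i <;> (simp [mcross]; ring)

lemma cramer3 (a b c w : Fin 3 → ℝ) :
    (mdet a b c) • w = (mdet w b c) • a + (mdet a w c) • b + (mdet a b w) • c := by
  funext i; fin_cases i <;>
    simp [mdet_expand, Pi.add_apply, Pi.smul_apply, smul_eq_mul, Matrix.vecHead, Matrix.vecTail, Function.comp] <;> ring

lemma L1 (p q : Fin 3 → ℝ) (k : ℝ) :
    mcross p (-p - k • mcross p q) = (k * mink p q) • p + (-(k * mink p p)) • q := by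
  funext i; fin_cases i <;>
    (simp [mcross, mink, Pi.add_apply, Pi.sub_apply, Pi.neg_apply, Pi.smul_apply, smul_eq_mul, Matrix.vecHead, Matrix.vecTail, Function.comp]; ring)

lemma L2 (p q : Fin 3 → ℝ) (α β δ : ℝ) :
    mcross (α • p + β • mcross p q) (δ • q) =
      (α * δ) • mcross p q + (β * δ * mink q q) • p + (-(β * δ * mink p q)) • q := by
  funext i; fin_cases i <;>
    (simp [mcross, mink, Pi.add_apply, Pi.smul_apply, smul_eq_mul, Matrix.vecHead, Matrix.vecTail, Function.comp]; ring)

lemma L3 (p q : Fin 3 → ℝ) (c₁ c₂ : ℝ) :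
    mink (c₁ • mcross p q + c₂ • p) (c₁ • mcross p q + c₂ • p) =
      c₁ ^ 2 * (mink p q ^ 2 - mink p p * mink q q) + c₂ ^ 2 * mink p p := by
  simp [mink, mcross, Pi.add_apply, Pi.smul_apply, smul_eq_mul, Matrix.vecHead, Matrix.vecTail, Function.comp]; ring

lemma L4 (p q : Fin 3 → ℝ) (α β : ℝ) :
    mink (α • p + β • mcross p q) (α • p + β • mcross p q) =
      α ^ 2 * mink p p + β ^ 2 * (mink p q ^ 2 - mink p p * mink q q) := by
  simp [mink, mcross, Pi.add_apply, Pi.smul_apply, smul_eq_mul, Matrix.vecHead, Matrix.vecTail, Function.comp]; ring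

lemma L56 (p q : Fin 3 → ℝ) (k ρ k' A t : ℝ) :
    A • (-p - k • mcross p q) +
      (A * t) • (mcross q (-p - k • mcross p q) + mcross p (-ρ • q - k' • mcross p q)) =
      (A * (t * k * mink q q + t * k' * mink p q - 1)) • p +
        (-(A * (t * k * mink p q + t * k' * mink p p))) • q +
        (A * (t - k - t * ρ)) • mcross p q := by
  funext i; fin_cases i <;>
    (simp [mcross, mink, Pi.add_apply, Pi.sub_apply, Pi.neg_apply, Pi.smul_apply, smul_eq_mul, Matrix.vecHead, Matrix.vecTail, Function.comp]; ring)

lemma L7 (p q : Fin 3 → ℝ) (α β δ c₁ c₂ c₃ : ℝ) :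
    mdet (α • p + β • mcross p q) (δ • q) (c₁ • p + c₂ • q + c₃ • mcross p q) =
      α * δ * c₃ * (mink p q ^ 2 - mink p p * mink q q) +
        β * δ * (mink q q * (c₁ * mink p p + c₂ * mink p q) -
          mink p q * (c₁ * mink p q + c₂ * mink q q)) := by
  simp [mdet_expand, mink, mcross, Pi.add_apply, Pi.smul_apply, smul_eq_mul, Matrix.vecHead, Matrix.vecTail, Function.comp]; ring

lemma L8 (p q : Fin 3 → ℝ) (k : ℝ) :
    mink (-p - k • mcross p q) (-p - k • mcross p q) =
      mink p p + k ^ 2 * (mink p q ^ 2 - mink p p * mink q q) := by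
  simp [mink, mcross, Pi.add_apply, Pi.sub_apply, Pi.neg_apply, Pi.smul_apply, smul_eq_mul, Matrix.vecHead, Matrix.vecTail, Function.comp]; ring
lemma hasDerivAt_mink {F G : ℝ → Fin 3 → ℝ} {F' G' : Fin 3 → ℝ} {x : ℝ}
    (hF : HasDerivAt F F' x) (hG : HasDerivAt G G' x) :
    HasDerivAt (fun v => mink (F v) (G v)) (mink F' (G x) + mink (F x) G') x := by
  have hFi := hasDerivAt_pi.mp hF
  have hGi := hasDerivAt_pi.mp hG
  have h := (((hFi 0).mul (hGi 0)).add ((hFi 1).mul (hGi 1))).sub ((hFi 2).mul (hGi 2))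
  exact h.congr_deriv (by simp [mink]; ring)

lemma hasDerivAt_mcross {F G : ℝ → Fin 3 → ℝ} {F' G' : Fin 3 → ℝ} {x : ℝ}
    (hF : HasDerivAt F F' x) (hG : HasDerivAt G G' x) :
    HasDerivAt (fun v => mcross (F v) (G v)) (mcross F' (G x) + mcross (F x) G') x := by
  have hFi := hasDerivAt_pi.mp hF
  have hGi := hasDerivAt_pi.mp hG
  apply hasDerivAt_pi.mpr
  intro i
  fin_cases i
  · exact (((hFi 1).mul (hGi 2)).sub ((hFi 2).mul (hGi 1))).congr_deriv
      (by simp [mcross, Pi.add_apply]; ring)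
  · exact (((hFi 2).mul (hGi 0)).sub ((hFi 0).mul (hGi 2))).congr_deriv
      (by simp [mcross, Pi.add_apply]; ring)
  · exact (((hFi 1).mul (hGi 0)).sub ((hFi 0).mul (hGi 1))).congr_deriv
      (by simp [mcross, Pi.add_apply]; ring)

lemma hasDerivAt_mdet {F G H : ℝ → Fin 3 → ℝ} {F' G' H' : Fin 3 → ℝ} {x : ℝ}
    (hF : HasDerivAt F F' x) (hG : HasDerivAt G G' x) (hH : HasDerivAt H H' x) :
    HasDerivAt (fun v => mdet (F v) (G v) (H v))
      (mdet F' (G x) (H x) + mdet (F x) G' (H x) + mdet (F x) (G x) H') x := by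
  have hFi := hasDerivAt_pi.mp hF
  have hGi := hasDerivAt_pi.mp hG
  have hHi := hasDerivAt_pi.mp hH
  have h := ((((hFi 0).mul (((hGi 1).mul (hHi 2)).sub ((hGi 2).mul (hHi 1)))).sub
      ((hFi 1).mul (((hGi 0).mul (hHi 2)).sub ((hGi 2).mul (hHi 0))))).add
      ((hFi 2).mul (((hGi 0).mul (hHi 1)).sub ((hGi 1).mul (hHi 0)))))
  have heq : (fun v => mdet (F v) (G v) (H v)) = fun v =>
      F v 0 * (G v 1 * H v 2 - G v 2 * H v 1) - F v 1 * (G v 0 * H v 2 - G v 2 * H v 0) +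
        F v 2 * (G v 0 * H v 1 - G v 1 * H v 0) := by
    funext v; rw [mdet_expand]
  rw [heq]
  exact h.congr_deriv (by rw [mdet_expand, mdet_expand, mdet_expand]; simp only [Pi.mul_apply, Pi.sub_apply]; ring)

lemma deriv_eq_zero_of_const_on {F : ℝ → ℝ} {c d : ℝ} {s : Set ℝ} (hs : IsOpen s) {v : ℝ}
    (hv : v ∈ s) (hF : HasDerivAt F c v) (hconst : ∀ w ∈ s, F w = d) : c = 0 := by
  have hev : F =ᶠ[nhds v] (fun _ => d) := Filter.eventuallyEq_of_mem (hs.mem_nhds hv) hconst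
  rw [← hF.deriv, hev.deriv_eq, deriv_const]
/-- the unit speed space-like curve f on S²₁ is a part of a pseudo-circle
(κ_g' ≡ 0 on I) iff the corresponding space-like Bertrand curve γ is a helix,
i.e. its curvature κ and torsion τ are non-zero constant functions on I. -/
theorem deSitter_pseudo_circle_iff_bertrand_helix
    (a b : ℝ) (I : Set ℝ) (hI : I = Set.Ioo a b) (h0 : (0:ℝ) ∈ I)
    (f : ℝ → Fin 3 → ℝ) (hf : ContDiff ℝ (⊤ : ℕ∞) f)
    (hf1 : ∀ v ∈ I, mink (f v) (f v) = 1)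
    (hf2 : ∀ v ∈ I, mink (deriv f v) (deriv f v) = 1)
    (κg : ℝ → ℝ) (hκg : ∀ v, κg v = mdet (f v) (deriv f v) (deriv (deriv f) v))
    (A ξ : ℝ) (hA : 0 < A)
    (hξκ : ∀ v ∈ I, Real.tanh ξ * κg v < 1)
    (γ : ℝ → Fin 3 → ℝ)
    (hγ : ∀ v, γ v = A • (∫ w in (0:ℝ)..v, f w) +
        (A * Real.tanh ξ) • (∫ w in (0:ℝ)..v, mcross (f w) (deriv f w)))
    (κ τ : ℝ → ℝ)
    (hκdef : ∀ v, κ v = mnorm (mcross (deriv γ v) (deriv (deriv γ) v)) /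
        (mink (deriv γ v) (deriv γ v)) ^ (3/2 : ℝ))
    (hτdef : ∀ v, τ v =
        mdet (deriv γ v) (deriv (deriv γ) v) (deriv (deriv (deriv γ)) v) /
        (mnorm (mcross (deriv γ v) (deriv (deriv γ) v))) ^ 2)
    (hne : ∀ v ∈ I, κg v ≠ Real.tanh ξ) :
    (∀ v ∈ I, deriv κg v = 0) ↔
      ∃ c₁ c₂ : ℝ, c₁ ≠ 0 ∧ c₂ ≠ 0 ∧ ∀ v ∈ I, κ v = c₁ ∧ τ v = c₂ := by

  have hIopen : IsOpen I := by rw [hI]; exact isOpen_Ioo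
  have hIconv : Convex ℝ I := by rw [hI]; exact convex_Ioo a b
  set t := Real.tanh ξ with htdef
  have hu : 0 < 1 - t ^ 2 := by
    have hc := Real.cosh_pos ξ
    have hs := Real.cosh_sq ξ
    have : t ^ 2 < 1 := by
      rw [htdef, Real.tanh_eq_sinh_div_cosh, div_pow, div_lt_one (by positivity)]
      nlinarith
    linarith
  -- smoothness
  have hfS : ContDiff ℝ ∞ f := hf.of_le (by simp)
  set f1 := deriv f with hf1def
  obtain ⟨hdiff_f, hf1S⟩ := contDiff_infty_iff_deriv.mp hfS
  set f2 := deriv f1 with hf2def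
  obtain ⟨hdiff_f1, hf2S⟩ := contDiff_infty_iff_deriv.mp hf1S
  set f3 := deriv f2 with hf3def
  obtain ⟨hdiff_f2, hf3S⟩ := contDiff_infty_iff_deriv.mp hf2S
  have hdf : ∀ v, HasDerivAt f (f1 v) v := fun v => (hdiff_f v).hasDerivAt
  have hdf1 : ∀ v, HasDerivAt f1 (f2 v) v := fun v => (hdiff_f1 v).hasDerivAt
  have hdf2 : ∀ v, HasDerivAt f2 (f3 v) v := fun v => (hdiff_f2 v).hasDerivAt
  have hcf : Continuous f := hfS.continuous
  have hcf1 : Continuous f1 := hf1S.continuous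
  have hcomp : ∀ (F : ℝ → Fin 3 → ℝ), Continuous F → ∀ i, Continuous fun v => F v i :=
    fun F hF i => (continuous_apply i).comp hF
  have hcg : Continuous fun v => mcross (f v) (f1 v) := by
    apply continuous_pi; intro i; fin_cases i <;> simp only [mcross] <;>
    · simp only [Matrix.cons_val_zero, Matrix.cons_val_one, Matrix.head_cons,
        Matrix.cons_val_two, Matrix.tail_cons, Fin.mk_one, Fin.zero_eta, Fin.reduceFinMk]
      exact (((hcomp f hcf _).mul (hcomp f1 hcf1 _))).sub
        (((hcomp f hcf _).mul (hcomp f1 hcf1 _)))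
  -- derivatives of γ
  have hγfun : γ = fun v => A • (∫ w in (0:ℝ)..v, f w) +
      (A * t) • (∫ w in (0:ℝ)..v, mcross (f w) (f1 w)) := funext hγ
  set G1 : ℝ → Fin 3 → ℝ := fun v => A • f v + (A*t) • mcross (f v) (f1 v) with hG1def
  set G2 : ℝ → Fin 3 → ℝ := fun v => A • f1 v + (A*t) • mcross (f v) (f2 v) with hG2def
  set G3 : ℝ → Fin 3 → ℝ :=
    fun v => A • f2 v + (A*t) • (mcross (f1 v) (f2 v) + mcross (f v) (f3 v)) with hG3def
  have hdγ : ∀ v, HasDerivAt γ (G1 v) v := by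
    intro v
    rw [hγfun]
    exact ((hcf.integral_hasStrictDerivAt 0 v).hasDerivAt.const_smul A).add
      ((hcg.integral_hasStrictDerivAt 0 v).hasDerivAt.const_smul (A*t))
  have hderivγ : deriv γ = G1 := funext fun v => (hdγ v).deriv
  have hdG1 : ∀ v, HasDerivAt G1 (G2 v) v := by
    intro v
    have h := ((hdf v).const_smul A).add
      ((hasDerivAt_mcross (hdf v) (hdf1 v)).const_smul (A*t))
    exact h.congr_deriv (by rw [hG2def]; simp [mcross_self])
  have hderiv2 : deriv G1 = G2 := funext fun v => (hdG1 v).deriv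
  have hdG2 : ∀ v, HasDerivAt G2 (G3 v) v := by
    intro v
    exact ((hdf1 v).const_smul A).add
      ((hasDerivAt_mcross (hdf v) (hdf2 v)).const_smul (A*t))
  have hderiv3 : deriv G2 = G3 := funext fun v => (hdG2 v).deriv
  -- pointwise orthonormality relations on I
  have hpq : ∀ v ∈ I, mink (f v) (f1 v) = 0 := by
    intro v hv
    have h := deriv_eq_zero_of_const_on hIopen hv (hasDerivAt_mink (hdf v) (hdf v)) hf1
    rw [mink_comm (f1 v) (f v)] at h
    linarith
  have hpr : ∀ v ∈ I, mink (f v) (f2 v) = -1 := by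
    intro v hv
    have h := deriv_eq_zero_of_const_on hIopen hv (hasDerivAt_mink (hdf v) (hdf1 v)) hpq
    linarith [hf2 v hv]
  have hqr : ∀ v ∈ I, mink (f1 v) (f2 v) = 0 := by
    intro v hv
    have h := deriv_eq_zero_of_const_on hIopen hv (hasDerivAt_mink (hdf1 v) (hdf1 v)) hf2
    rw [mink_comm (f2 v) (f1 v)] at h
    linarith
  have hps : ∀ v ∈ I, mink (f v) (f3 v) = 0 := by
    intro v hv
    have h := deriv_eq_zero_of_const_on hIopen hv (hasDerivAt_mink (hdf v) (hdf2 v)) hpr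
    linarith [hqr v hv]
  have hqs : ∀ v ∈ I, mink (f1 v) (f3 v) = -(mink (f2 v) (f2 v)) := by
    intro v hv
    have h := deriv_eq_zero_of_const_on hIopen hv (hasDerivAt_mink (hdf1 v) (hdf2 v)) hqr
    linarith
  -- κg and its derivative
  have hκgfun : κg = fun v => mdet (f v) (f1 v) (f2 v) := funext hκg
  have hdκg : ∀ v, HasDerivAt κg (mdet (f v) (f1 v) (f3 v)) v := by
    intro v
    rw [hκgfun]
    exact (hasDerivAt_mdet (hdf v) (hdf1 v) (hdf2 v)).congr_deriv
      (by simp only [mdet_expand]; ring)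
  -- the key pointwise formulas
  have hformula : ∀ v ∈ I, κ v = (1 - t * κg v) / (A * (1 - t^2)) ∧
      τ v = (κg v - t) / (A * (1 - t^2)) := by
    intro v hv
    set p := f v with hp
    set q := f1 v with hq
    set r := f2 v with hrr
    set s := f3 v with hss
    have hκgv : κg v = mdet p q r := hκg v
    have hpp : mink p p = 1 := hf1 v hv
    have hqq : mink q q = 1 := hf2 v hv
    have hpq' : mink p q = 0 := hpq v hv
    have hpr' : mink p r = -1 := hpr v hv
    have hqr' : mink q r = 0 := hqr v hv
    have hps' : mink p s = 0 := hps v hv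
    have hqs' : mink q s = -(mink r r) := hqs v hv
    have hqp : mink q p = 0 := (mink_comm q p).trans hpq'
    have hrp : mink r p = -1 := (mink_comm r p).trans hpr'
    have hrq : mink r q = 0 := (mink_comm r q).trans hqr'
    have hsp : mink s p = 0 := (mink_comm s p).trans hps'
    have hsq : mink s q = -(mink r r) := (mink_comm s q).trans hqs'
    have hd1 : mdet p q (mcross p q) = -1 := by
      rw [mdet_eq_mink_mcross, lagrange, hpq', hqp, hpp, hqq]; ring
    have hd2 : mdet r q (mcross p q) = 1 := by
      rw [mdet_eq_mink_mcross, lagrange, hrq, hqp, hrp, hqq]; ring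
    have hd3 : mdet p r (mcross p q) = 0 := by
      rw [mdet_eq_mink_mcross, lagrange, hpq', hrp, hpp, hrq]; ring
    have hr : r = -p - mdet p q r • mcross p q := by
      have hc := cramer3 p q (mcross p q) r
      rw [hd1, hd2, hd3] at hc
      funext i
      have h := congrFun hc i
      simp only [Pi.smul_apply, Pi.add_apply, Pi.sub_apply, Pi.neg_apply, smul_eq_mul] at h ⊢
      linarith
    have hsd1 : mdet s q (mcross p q) = 0 := by
      rw [mdet_eq_mink_mcross, lagrange, hsq, hqp, hsp, hqq]; ring
    have hsd2 : mdet p s (mcross p q) = mink r r := by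
      rw [mdet_eq_mink_mcross, lagrange, hpq', hsp, hpp, hsq]; ring
    have hs : s = -mink r r • q - mdet p q s • mcross p q := by
      have hc := cramer3 p q (mcross p q) s
      rw [hd1, hsd1, hsd2] at hc
      funext i
      have h := congrFun hc i
      simp only [Pi.smul_apply, Pi.add_apply, Pi.sub_apply, Pi.neg_apply, smul_eq_mul] at h ⊢
      linarith
    have hρval : mink r r = 1 - (mdet p q r)^2 := by
      conv_lhs => rw [hr]
      rw [L8, hpp, hpq', hqq]; ring
    have hG1v : G1 v = A • p + (A*t) • mcross p q := rfl
    have hG2v : G2 v = (A * (1 - t * mdet p q r)) • q := by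
      have hstart : G2 v = A • q + (A*t) • mcross p r := rfl
      rw [hstart]
      conv_lhs => rw [hr]
      rw [L1, hpp, hpq']
      funext i
      simp only [Pi.smul_apply, Pi.add_apply, smul_eq_mul]
      ring
    have hm : 0 < 1 - t * mdet p q r := by
      have := hξκ v hv
      rw [hκgv] at this
      linarith
    have hX : mcross (G1 v) (G2 v) =
        (A^2*(1 - t*mdet p q r)) • mcross p q + (A^2*t*(1 - t*mdet p q r)) • p := by
      rw [hG1v, hG2v, L2, hqq, hpq']
      funext i
      simp only [Pi.smul_apply, Pi.add_apply, smul_eq_mul]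
      ring
    have hXX : mink (mcross (G1 v) (G2 v)) (mcross (G1 v) (G2 v)) =
        -(A^4*(1 - t*mdet p q r)^2*(1 - t^2)) := by
      rw [hX, L3, hpq', hpp, hqq]; ring
    have hG1G1 : mink (G1 v) (G1 v) = A^2*(1 - t^2) := by
      rw [hG1v, L4, hpp, hpq', hqq]; ring
    have hG3v : G3 v = (A*(t*mdet p q r - 1)) • p + (-(A*(t*mdet p q s))) • q +
        (A*(t - mdet p q r - t*(mink r r))) • mcross p q := by
      have hstart : G3 v = A • r + (A*t) • (mcross q r + mcross p s) := rfl
      rw [hstart]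
      conv_lhs => rw [hr, hs]
      rw [L56, hpp, hqq, hpq']
      funext i
      simp only [Pi.smul_apply, Pi.add_apply, smul_eq_mul]
      ring
    have hdet : mdet (G1 v) (G2 v) (G3 v) =
        A^3*(1 - t*mdet p q r)^2*(mdet p q r - t) := by
      rw [hG1v, hG2v, hG3v, L7, hpp, hqq, hpq', hρval]; ring
    have hsu : 0 < Real.sqrt (1 - t^2) := Real.sqrt_pos.mpr hu
    have hmX : mnorm (mcross (G1 v) (G2 v)) =
        (A^2*(1 - t*mdet p q r)) * Real.sqrt (1 - t^2) := by
      rw [mnorm, hXX, abs_neg, abs_of_nonneg (by positivity), show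
        A^4*(1 - t*mdet p q r)^2*(1 - t^2) = (A^2*(1 - t*mdet p q r))^2 * (1 - t^2) by ring,
        Real.sqrt_mul (sq_nonneg _), Real.sqrt_sq (by positivity)]
    have hden : (mink (G1 v) (G1 v)) ^ (3/2:ℝ) =
        (A^2*(1 - t^2)) * (A * Real.sqrt (1 - t^2)) := by
      rw [hG1G1]
      have hP : (0:ℝ) < A^2*(1 - t^2) := by positivity
      rw [show (3/2:ℝ) = 1 + 1/2 by norm_num, Real.rpow_add hP, Real.rpow_one,
        ← Real.sqrt_eq_rpow, Real.sqrt_mul (sq_nonneg A), Real.sqrt_sq hA.le]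
    constructor
    · rw [hκdef v, hderivγ, hderiv2, hmX, hden, hκgv]
      rw [div_eq_div_iff (by positivity) (by positivity)]
      ring
    · rw [hτdef v, hderivγ, hderiv2, hderiv3, hdet, hmX, hκgv]
      rw [mul_pow, Real.sq_sqrt hu.le]
      rw [div_eq_div_iff (by positivity) (by positivity)]
      ring
  -- conclusion
  have hAu : A * (1 - t^2) ≠ 0 := by positivity
  constructor
  · intro hzero
    have hconst : ∀ v ∈ I, κg v = κg 0 := by
      intro v hv
      refine hIconv.is_const_of_fderivWithin_eq_zero (f := κg)
        (fun w hw => ((hdκg w).differentiableAt).differentiableWithinAt) ?_ hv h0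
      intro x hx
      have h1 : HasDerivAt κg (deriv κg x) x := (hdκg x).differentiableAt.hasDerivAt
      rw [hzero x hx] at h1
      rw [fderivWithin_of_isOpen hIopen hx, h1.hasFDerivAt.fderiv]
      ext
      simp
    refine ⟨(1 - t*κg 0)/(A*(1 - t^2)), (κg 0 - t)/(A*(1 - t^2)), ?_, ?_, ?_⟩
    · have h1 : 0 < 1 - t * κg 0 := by linarith [hξκ 0 h0]
      positivity
    · exact div_ne_zero (sub_ne_zero.mpr (hne 0 h0)) hAu
    · intro v hv
      obtain ⟨h1, h2⟩ := hformula v hv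
      rw [h1, h2, hconst v hv]
      exact ⟨rfl, rfl⟩
  · rintro ⟨c₁, c₂, hc₁, hc₂, hc⟩ v hv
    have hval : ∀ w ∈ I, κg w = c₂*(A*(1 - t^2)) + t := by
      intro w hw
      have h2 := (hc w hw).2
      rw [(hformula w hw).2, div_eq_iff hAu] at h2
      linarith
    exact deriv_eq_zero_of_const_on hIopen hv
      ((hdκg v).differentiableAt.hasDerivAt) hval
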